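/- arXiv:1106.1006 — 3 statements merged into one kernel-verified Lean document; each statement's English description precedes it below -/
import Mathlib

section
/- Let R be a commutative algebra over a field k of characteristic zero, F a free R-module of odd rank n = 2m+1 ≥ 3 with basis e_1,...,e_n and dual basis e^1,...,e^n of F*. Let φ = Σ_{i<j} x_{ij} e_i ∧ e_j ∈ Λ²F. Define f : F* → F by f(a*) = a* ⌟ φ and g : F → Λ^n F by g(b) = b ∧ (Λ^m φ). Then g ∘ f = 0. -/
/-!
Contraction with `a` is an antiderivation of the exterior algebra, so on the even element `φ` it
obeys the Leibniz rule, and `a ⌟ φ = f(a)` is a vector commuting with `φ`. Hence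
`a ⌟ φ^(m+1) = (m+1) f(a) ∧ φ^m`. But `φ^(m+1)` has degree `2m+2 > n`, so it vanishes, and
`m+1` is invertible in `R`.
-/

open ExteriorAlgebra
open CliffordAlgebra (contractLeft contractLeft_ι contractLeft_ι_mul)

theorem eq_zero_of_nsmul_eq_zero_of_charZero (k R : Type*) {A : Type*} [Field k] [CharZero k]
    [CommRing R] [Algebra k R] [AddCommGroup A] [Module R A] {n : ℕ} (hn : n ≠ 0) {x : A}
    (h : n • x = 0) : x = 0 := by
  have hunit : IsUnit (n : R) := by
    simpa using (Nat.cast_ne_zero.mpr hn : (n : k) ≠ 0).isUnit.map (algebraMap k R)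
  rwa [← Nat.cast_smul_eq_nsmul R, hunit.smul_eq_zero] at h

namespace ExteriorAlgebra

variable {R M : Type*} [CommRing R] [AddCommGroup M] [Module R M]

theorem exteriorPower_eq_bot_of_card_lt {I : Type*} [LinearOrder I] [Finite I]
    (b : Module.Basis I R M) {n : ℕ} (h : Nat.card I < n) : ⋀[R]^n M = ⊥ := by
  have : IsEmpty (Set.powersetCard I n) :=
    Set.isEmpty_coe_sort.mpr (Set.powersetCard.eq_empty_iff.mpr h)
  have := (b.exteriorPower n).repr.toEquiv.subsingleton
  exact Submodule.eq_bot_of_subsingleton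

theorem ι_mul_ι_mem_exteriorPower_two (u v : M) : ι R u * ι R v ∈ ⋀[R]^2 M :=
  SetLike.mul_mem_graded (i := 1) (j := 1) (by simp) (by simp)

@[elab_as_elim]
theorem exteriorPower_two_induction_on {P : ExteriorAlgebra R M → Prop}
    {φ : ExteriorAlgebra R M} (hφ : φ ∈ ⋀[R]^2 M) (ι_mul_ι : ∀ u v, P (ι R u * ι R v))
    (add : ∀ x y, P x → P y → P (x + y)) : P φ := by
  rw [exteriorPower, pow_two] at hφ
  refine Submodule.mul_induction_on hφ ?_ add
  rintro _ ⟨u, rfl⟩ _ ⟨v, rfl⟩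
  exact ι_mul_ι u v

theorem commute_ι_of_mem_exteriorPower_two {φ : ExteriorAlgebra R M} (hφ : φ ∈ ⋀[R]^2 M)
    (w : M) : Commute φ (ι R w) := by
  refine exteriorPower_two_induction_on hφ (fun u v => ?_) fun _ _ hx hy => hx.add_left hy
  have anticomm (a b : M) : ι R a * ι R b = -(ι R b * ι R a) :=
    eq_neg_of_add_eq_zero_left (ι_add_mul_swap a b)
  change ι R u * ι R v * ι R w = ι R w * (ι R u * ι R v)
  rw [mul_assoc, anticomm v w, mul_neg, ← mul_assoc, anticomm u w, neg_mul, neg_neg, mul_assoc]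

theorem contractLeft_ι_mul_ι (d : Module.Dual R M) (u v : M) :
    contractLeft d (ι R u * ι R v) = d u • ι R v - d v • ι R u := by
  rw [contractLeft_ι_mul, contractLeft_ι, Algebra.algebraMap_eq_smul_one, mul_smul_comm, mul_one]

theorem contractLeft_mul_of_mem_exteriorPower_two (d : Module.Dual R M) {φ : ExteriorAlgebra R M}
    (hφ : φ ∈ ⋀[R]^2 M) (y : ExteriorAlgebra R M) :
    contractLeft d (φ * y) = contractLeft d φ * y + φ * contractLeft d y := by
  refine exteriorPower_two_induction_on hφ (fun u v => ?_) fun x x' hx hx' => ?_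
  · rw [mul_assoc, contractLeft_ι_mul, contractLeft_ι_mul, contractLeft_ι_mul_ι]
    simp only [mul_sub, sub_mul, smul_mul_assoc, mul_smul_comm, mul_assoc]
    abel
  · simp only [add_mul, map_add, hx, hx']; abel

theorem exists_contractLeft_eq_ι (d : Module.Dual R M) {φ : ExteriorAlgebra R M}
    (hφ : φ ∈ ⋀[R]^2 M) : ∃ w, contractLeft d φ = ι R w := by
  refine exteriorPower_two_induction_on hφ (fun u v => ?_) ?_
  · exact ⟨d u • v - d v • u, by simp [contractLeft_ι_mul_ι]⟩
  · rintro x x' ⟨w, hw⟩ ⟨w', hw'⟩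
    exact ⟨w + w', by simp [hw, hw']⟩

theorem contractLeft_pow_succ_of_mem_exteriorPower_two (d : Module.Dual R M)
    {φ : ExteriorAlgebra R M} (hφ : φ ∈ ⋀[R]^2 M) (t : ℕ) :
    contractLeft d (φ ^ (t + 1)) = (t + 1) • (contractLeft d φ * φ ^ t) := by
  obtain ⟨w, hw⟩ := exists_contractLeft_eq_ι d hφ
  induction t with
  | zero => simp
  | succ t ih =>
    rw [pow_succ', contractLeft_mul_of_mem_exteriorPower_two d hφ, ih, mul_smul_comm, hw,
      ← mul_assoc, (commute_ι_of_mem_exteriorPower_two hφ w).eq, mul_assoc, ← pow_succ',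
      succ_nsmul' _ (t + 1)]

end ExteriorAlgebra

theorem stmt_4_general {k R F : Type*} [Field k] [CharZero k] [CommRing R] [Algebra k R]
    [AddCommGroup F] [Module R F]
    (m : ℕ) (e : Module.Basis (Fin (2 * m + 1)) R F)
    (x : Fin (2 * m + 1) → Fin (2 * m + 1) → R) (a : Module.Dual R F)
    (φ : ExteriorAlgebra R F)
    (hφ : φ = ∑ i : Fin (2 * m + 1), ∑ j : Fin (2 * m + 1),
        if i < j then x i j • (ι R (e i) * ι R (e j)) else 0)
    (fa : F)
    (hfa : fa = ∑ i : Fin (2 * m + 1), ∑ j : Fin (2 * m + 1),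
        if i < j then x i j • (a (e i) • e j - a (e j) • e i) else 0) :
    ι R fa * φ ^ m = 0 := by
  have hφ₂ : φ ∈ ⋀[R]^2 F := by
    rw [hφ]
    refine Submodule.sum_mem _ fun i _ => Submodule.sum_mem _ fun j _ => ?_
    split_ifs
    · exact Submodule.smul_mem _ _ (ι_mul_ι_mem_exteriorPower_two _ _)
    · exact Submodule.zero_mem _
  have hcontract : contractLeft a φ = ι R fa := by
    simp only [hφ, hfa, map_sum, apply_ite, map_smul, map_sub, map_zero, contractLeft_ι_mul_ι]
  have hvanish : φ ^ (m + 1) = 0 := by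
    have hmem : φ ^ (m + 1) ∈ ⋀[R]^((m + 1) • 2) F := SetLike.pow_mem_graded _ hφ₂
    rwa [exteriorPower_eq_bot_of_card_lt e (by simp; omega), Submodule.mem_bot] at hmem
  refine eq_zero_of_nsmul_eq_zero_of_charZero k R m.succ_ne_zero ?_
  rw [← hcontract, ← contractLeft_pow_succ_of_mem_exteriorPower_two a hφ₂, hvanish, map_zero]

/-- Part of Lemma 2.4 (Buchsbaum–Eisenbud): let `R` be a commutative algebra
over a field `k` of characteristic zero, `F` a free `R`-module of odd rank
`n = 2m+1 ≥ 3` with basis `e_1, …, e_n`, and `φ = Σ_{i<j} x_{ij} e_i ∧ e_j ∈ Λ²F`.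
Let `f(a*) = a* ⌟ φ` (interior multiplication, so
`f(a*) = Σ_{i<j} x_{ij} (⟨a*,e_i⟩ e_j − ⟨a*,e_j⟩ e_i)`) and
`g(b) = b ∧ (Λ^m φ)`.  Then `g ∘ f = 0`, i.e. `f(a*) ∧ φ^m = 0` for every
`a* ∈ F*`. -/
theorem stmt_4 {k R F : Type*} [Field k] [CharZero k] [CommRing R] [Algebra k R]
    [AddCommGroup F] [Module R F]
    (m : ℕ) (hm : 1 ≤ m) (e : Module.Basis (Fin (2 * m + 1)) R F)
    (x : Fin (2 * m + 1) → Fin (2 * m + 1) → R) (a : Module.Dual R F)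
    (φ : ExteriorAlgebra R F)
    (hφ : φ = ∑ i : Fin (2 * m + 1), ∑ j : Fin (2 * m + 1),
        if i < j then x i j • (ι R (e i) * ι R (e j)) else 0)
    (fa : F)
    (hfa : fa = ∑ i : Fin (2 * m + 1), ∑ j : Fin (2 * m + 1),
        if i < j then x i j • (a (e i) • e j - a (e j) • e i) else 0) :
    ι R fa * φ ^ m = 0 :=
  stmt_4_general (k := k) m e x a φ hφ fa hfa
end

section
/- Let k be a field of characteristic zero, F a free module of odd rank n = 2m+1 ≥ 3 over a commutative k-algebra R, with basis e_1,...,e_n, and φ ∈ Λ²F with associated skew-symmetric matrix Φ = (x_{ij}). Then for each i, e_i ∧ (Λ^m φ) = m! (−1)^{i−1} Pf(Φ_i) · e_1 ∧ ⋯ ∧ e_n, where Φ_i is Φ with its i-th row and column deleted and Pf denotes the Pfaffian. -/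
/-
Since `Φ` is skew and `e_a ∧ e_b = -e_b ∧ e_a`, the full double sum
`ψ = Σ_{a,b} x_{ab} e_a ∧ e_b` equals `2φ`. Expanding `ψ^m` gives a sum over all
`2m`-tuples `f` of `x_{f₀f₁} ⋯ x_{f_{2m-2}f_{2m-1}} · e_{f₀} ∧ ⋯ ∧ e_{f_{2m-1}}`.
After multiplying by `e_i`, a term vanishes unless `i, f₀, …, f_{2m-1}` are distinct,
i.e. `f = succAbove i ∘ σ` for a permutation `σ`, and sorting the wedge then costs
`(-1)^i sgn σ`. What remains is `(-1)^i Σ_σ sgn σ ∏ₖ x_{σ(2k)σ(2k+1)}`, which is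
`(-1)^i 2^m m! Pf(Φ_i)`.
-/

open ExteriorAlgebra

/-- The Pfaffian of a `2m × 2m` matrix over a commutative algebra `R` over a
field of characteristic zero (so that `R` is a `ℚ`-algebra), defined by
`Pf(A) = (1/(2^m m!)) Σ_σ sgn(σ) Π_{i=1}^{m} A_{σ(2i-1) σ(2i)}`. -/
noncomputable def pfaffian {R : Type*} [CommRing R] [Algebra ℚ R] (m : ℕ)
    (A : Matrix (Fin (2 * m)) (Fin (2 * m)) R) : R :=
  algebraMap ℚ R (1 / ((2 : ℚ) ^ m * (m.factorial : ℚ))) *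
    ∑ σ : Equiv.Perm (Fin (2 * m)),
      ((Equiv.Perm.sign σ : ℤ) : R) *
        ∏ i : Fin m,
          A (σ ⟨2 * i.val, by have := i.isLt; omega⟩)
            (σ ⟨2 * i.val + 1, by have := i.isLt; omega⟩)

theorem Fintype.sum_fun_fin_succ {ι M : Type*} [Fintype ι] [AddCommMonoid M] {n : ℕ}
    (g : (Fin (n + 1) → ι) → M) :
    ∑ f, g f = ∑ a, ∑ f : Fin n → ι, g (Fin.cons a f) := by
  rw [← Fintype.sum_prod_type']
  exact (Fintype.sum_equiv (Fin.consEquiv fun _ => ι) _ _ fun _ => rfl).symm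

def pairProd {α R : Type*} [CommMonoid R] (x : Matrix α α R) {m : ℕ} (f : Fin (2 * m) → α) :
    R :=
  ∏ k : Fin m, x (f ⟨2 * k, by omega⟩) (f ⟨2 * k + 1, by omega⟩)

theorem pairProd_cons_cons {α R : Type*} [CommMonoid R] (x : Matrix α α R) {m : ℕ}
    (a b : α) (f : Fin (2 * m) → α) :
    pairProd (m := m + 1) x (Fin.cons a (Fin.cons b f)) = x a b * pairProd x f := by
  rw [pairProd, Fin.prod_univ_succ]
  rfl

theorem pairProd_comp {α β R : Type*} [CommMonoid R] (x : Matrix β β R) (s : α → β) {m : ℕ}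
    (f : Fin (2 * m) → α) : pairProd x (s ∘ f) = pairProd (x.submatrix s s) f :=
  rfl

theorem sum_sum_smul_mul_pow {R A ι : Type*} [CommSemiring R] [Semiring A] [Algebra R A]
    [Fintype ι] (x : Matrix ι ι R) (v : ι → A) (m : ℕ) :
    (∑ a, ∑ b, x a b • (v a * v b)) ^ m =
      ∑ f : Fin (2 * m) → ι, pairProd x f • (List.ofFn (v ∘ f)).prod := by
  induction m with
  | zero => simp [pairProd]
  | succ m ih =>
    -- `Fin (2 * (m + 1))` is `Fin (2 * m + 1 + 1)` only up to defeq, so `rw` cannot split it.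
    refine Eq.trans ?_ (Fintype.sum_fun_fin_succ (n := 2 * m + 1) _).symm
    simp_rw [pow_succ', ih, Fintype.sum_fun_fin_succ (n := 2 * m), Finset.sum_mul, Finset.mul_sum]
    refine Fintype.sum_congr _ _ fun a => Fintype.sum_congr _ _ fun b =>
      Fintype.sum_congr _ _ fun f => ?_
    rw [pairProd_cons_cons, smul_mul_smul_comm]
    simp [List.ofFn_succ, mul_assoc, Function.comp_def]

theorem Fin.exists_eq_succAbove_comp_perm {n : ℕ} {i : Fin (n + 1)} {g : Fin n → Fin (n + 1)}
    (hg : Function.Injective (Fin.cons i g : Fin (n + 1) → Fin (n + 1))) :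
    ∃ σ : Equiv.Perm (Fin n), g = i.succAbove ∘ σ := by
  obtain ⟨hi, hg⟩ := Fin.cons_injective_iff.mp hg
  choose z hz using fun t => Fin.exists_succAbove_eq fun h : g t = i => hi ⟨t, h⟩
  have hz_inj : Function.Injective z := fun a b hab => hg (by rw [← hz a, ← hz b, hab])
  exact ⟨Equiv.ofBijective z (Finite.injective_iff_bijective.mp hz_inj),
    funext fun t => (hz t).symm⟩

theorem Fin.cons_succAbove_comp_perm {n : ℕ} (i : Fin (n + 1)) (σ : Equiv.Perm (Fin n)) :
    (Fin.cons i (i.succAbove ∘ σ) : Fin (n + 1) → Fin (n + 1)) =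
      (Fin.cycleRange i).symm ∘ Equiv.Perm.decomposeFin.symm (0, σ) := by
  funext t
  refine Fin.cases ?_ (fun s => ?_) t <;> simp [Equiv.Perm.decomposeFin_symm_apply_succ]

theorem AlternatingMap.sum_smul_map_comp_cons {R M N : Type*} [CommRing R] [AddCommGroup M]
    [Module R M] [AddCommGroup N] [Module R N] {n : ℕ} (f : M [⋀^Fin (n + 1)]→ₗ[R] N)
    (v : Fin (n + 1) → M) (i : Fin (n + 1)) (c : (Fin n → Fin (n + 1)) → R) :
    ∑ g : Fin n → Fin (n + 1), c g • f (v ∘ Fin.cons i g) =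
      ((-1) ^ (i : ℕ) * ∑ σ : Equiv.Perm (Fin n), ((Equiv.Perm.sign σ : ℤ) : R) *
        c (i.succAbove ∘ σ)) • f v := by
  classical
  have h_off : ∀ g ∉ Finset.univ.image fun σ : Equiv.Perm (Fin n) => i.succAbove ∘ σ,
      c g • f (v ∘ Fin.cons i g) = 0 := by
    intro g hg
    have h_not_inj : ¬Function.Injective (v ∘ Fin.cons i g) := fun h => by
      obtain ⟨σ, rfl⟩ := Fin.exists_eq_succAbove_comp_perm h.of_comp
      exact hg (Finset.mem_image_of_mem _ (Finset.mem_univ σ))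
    rw [f.map_eq_zero_of_not_injective _ h_not_inj, smul_zero]
  have h_on : ∀ σ : Equiv.Perm (Fin n),
      c (i.succAbove ∘ σ) • f (v ∘ Fin.cons i (i.succAbove ∘ σ)) =
        ((-1) ^ (i : ℕ) * (((Equiv.Perm.sign σ : ℤ) : R) * c (i.succAbove ∘ σ))) • f v := by
    intro σ
    rw [Fin.cons_succAbove_comp_perm, ← Function.comp_assoc, f.map_perm, f.map_perm]
    simp only [Equiv.Perm.sign_symm, Equiv.Perm.decomposeFin.symm_sign, Fin.sign_cycleRange,
      Units.smul_def, ← Int.cast_smul_eq_zsmul R, smul_smul]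
    congr 1
    push_cast
    ring
  rw [← Finset.sum_subset (Finset.subset_univ _) fun g _ hg => h_off g hg,
    Finset.sum_image fun σ _ τ _ h => ?_]
  · simp_rw [h_on, ← Finset.sum_smul, ← Finset.mul_sum]
  · exact Equiv.ext fun t => Fin.succAbove_right_injective (congrFun h t)

theorem Fintype.sum_sum_eq_two_nsmul_sum_sum_ite_lt {ι M : Type*} [Fintype ι] [LinearOrder ι]
    [AddCommMonoid M] (f : ι → ι → M) (hf : ∀ a b, f b a = f a b) (hdiag : ∀ a, f a a = 0) :
    ∑ a, ∑ b, f a b = 2 • ∑ a, ∑ b, if a < b then f a b else 0 := by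
  have h_split : ∀ a b, f a b = (if a < b then f a b else 0) + if b < a then f b a else 0 := by
    intro a b
    rcases lt_trichotomy a b with h | rfl | h
    · simp [h, h.not_gt]
    · simp [hdiag]
    · simp [h, h.not_gt, hf]
  calc ∑ a, ∑ b, f a b
      = (∑ a, ∑ b, if a < b then f a b else 0) + ∑ a, ∑ b, if b < a then f b a else 0 := by
        simp only [← Finset.sum_add_distrib, ← h_split]
    _ = 2 • ∑ a, ∑ b, if a < b then f a b else 0 := by
        rw [two_nsmul, Finset.sum_comm (f := fun a b => if b < a then f b a else 0)]

theorem factorial_mul_pfaffian {R : Type*} [CommRing R] [Algebra ℚ R] (m : ℕ)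
    (A : Matrix (Fin (2 * m)) (Fin (2 * m)) R) :
    (m.factorial : R) * pfaffian m A =
      algebraMap ℚ R (2 ^ m)⁻¹ * ∑ σ : Equiv.Perm (Fin (2 * m)),
        ((Equiv.Perm.sign σ : ℤ) : R) * pairProd A σ := by
  rw [pfaffian, ← mul_assoc, ← map_natCast (algebraMap ℚ R), ← map_mul]
  congr 2
  field_simp

theorem ExteriorAlgebra.ι_mul_sum_sum_smul_mul_pow {R M κ : Type*} [CommRing R]
    [AddCommGroup M] [Module R M] [Fintype κ] (x : Matrix κ κ R) (v : κ → M) (m : ℕ) (i : κ) :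
    ι R (v i) * (∑ a, ∑ b, x a b • (ι R (v a) * ι R (v b))) ^ m =
      ∑ f : Fin (2 * m) → κ, pairProd x f • ιMulti R (2 * m + 1) (v ∘ Fin.cons i f) := by
  rw [sum_sum_smul_mul_pow, Finset.mul_sum]
  refine Fintype.sum_congr _ _ fun f => ?_
  rw [mul_smul_comm, ιMulti_apply, List.ofFn_succ, List.prod_cons]
  rfl

theorem stmt_5_general {R F : Type*} [CommRing R] [Algebra ℚ R]
    [AddCommGroup F] [Module R F]
    (m : ℕ) (e : Module.Basis (Fin (2 * m + 1)) R F)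
    (x : Matrix (Fin (2 * m + 1)) (Fin (2 * m + 1)) R)
    (hx : ∀ i j, x j i = - x i j)
    (φ : ExteriorAlgebra R F)
    (hφ : φ = ∑ i : Fin (2 * m + 1), ∑ j : Fin (2 * m + 1),
        if i < j then x i j • (ι R (e i) * ι R (e j)) else 0)
    (i : Fin (2 * m + 1)) :
    ι R (e i) * φ ^ m =
      ((m.factorial : R) * (-1 : R) ^ (i : ℕ) *
          pfaffian m (x.submatrix i.succAbove i.succAbove)) •
        (List.ofFn fun j : Fin (2 * m + 1) => ι R (e j)).prod := by
  have h_two : ∑ a, ∑ b, x a b • (ι R (e a) * ι R (e b)) = 2 • φ := by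
    rw [hφ]
    refine Fintype.sum_sum_eq_two_nsmul_sum_sum_ite_lt _ (fun a b => ?_) fun a => ?_
    · rw [hx, ← neg_eq_of_add_eq_zero_left (ι_add_mul_swap (e a) (e b)), neg_smul,
        smul_neg]
    · rw [ι_sq_zero, smul_zero]
  have h_half : φ = algebraMap ℚ R 2⁻¹ • ∑ a, ∑ b, x a b • (ι R (e a) * ι R (e b)) := by
    rw [h_two, ← Nat.cast_smul_eq_nsmul R, smul_smul, ← map_natCast (algebraMap ℚ R),
      ← map_mul]
    norm_num
  calc ι R (e i) * φ ^ m
      = algebraMap ℚ R (2 ^ m)⁻¹ • ∑ f : Fin (2 * m) → Fin (2 * m + 1),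
          pairProd x f • ιMulti R (2 * m + 1) (e ∘ Fin.cons i f) := by
        rw [h_half, smul_pow, mul_smul_comm, ι_mul_sum_sum_smul_mul_pow, ← map_pow, inv_pow]
    _ = algebraMap ℚ R (2 ^ m)⁻¹ • ((-1) ^ (i : ℕ) * ∑ σ : Equiv.Perm (Fin (2 * m)),
          ((Equiv.Perm.sign σ : ℤ) : R) * pairProd x (i.succAbove ∘ σ)) •
            ιMulti R (2 * m + 1) e := by
        rw [AlternatingMap.sum_smul_map_comp_cons]
    _ = _ := by
        rw [smul_smul, ← ιMulti_apply, mul_right_comm, factorial_mul_pfaffian]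
        simp only [pairProd_comp]
        congr 1
        ring

/-- The Pfaffian formula for the map `g` in Lemma 2.4 (Buchsbaum–Eisenbud):
with `F` free of odd rank `n = 2m+1 ≥ 3` over a commutative algebra `R` over a
field of characteristic zero, basis `e_1, …, e_n`, and
`φ = Σ_{i<j} x_{ij} e_i ∧ e_j ∈ Λ²F` with associated skew-symmetric matrix
`Φ = (x_{ij})`, one has, for each `i`,
`e_i ∧ (Λ^m φ) = m! (−1)^{i−1} Pf(Φ_i) · e_1 ∧ ⋯ ∧ e_n`,
where `Φ_i` is `Φ` with its `i`-th row and column deleted.  (Indices here are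
`0`-based, so the sign `(−1)^{i−1}` of the paper becomes `(−1)^{i}`.) -/
theorem stmt_5 {R F : Type*} [CommRing R] [Algebra ℚ R]
    [AddCommGroup F] [Module R F]
    (m : ℕ) (hm : 1 ≤ m) (e : Module.Basis (Fin (2 * m + 1)) R F)
    (x : Matrix (Fin (2 * m + 1)) (Fin (2 * m + 1)) R)
    (hx : ∀ i j, x j i = - x i j)
    (φ : ExteriorAlgebra R F)
    (hφ : φ = ∑ i : Fin (2 * m + 1), ∑ j : Fin (2 * m + 1),
        if i < j then x i j • (ι R (e i) * ι R (e j)) else 0)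
    (i : Fin (2 * m + 1)) :
    ι R (e i) * φ ^ m =
      ((m.factorial : R) * (-1 : R) ^ (i : ℕ) *
          pfaffian m (x.submatrix i.succAbove i.succAbove)) •
        (List.ofFn fun j : Fin (2 * m + 1) => ι R (e j)).prod :=
  stmt_5_general m e x hx φ hφ i
end

section
/- Let h : A → B and p : A → S, q : B → S be continuous maps of topological spaces with q ∘ h = p. If p and h are Serre fibrations and h is surjective, then q is a Serre fibration. -/
open unitInterval

/-- A continuous map is a Serre fibration if it has the homotopy lifting
property with respect to all cubes `I^n`, `n ≥ 0`. -/
def IsSerreFibration {A S : Type*} [TopologicalSpace A] [TopologicalSpace S]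
    (p : A → S) : Prop :=
  ∀ n : ℕ, ∀ f : C(Fin n → I, A), ∀ G : C((Fin n → I) × I, S),
    (∀ x, G (x, 0) = p (f x)) →
    ∃ F : C((Fin n → I) × I, A),
      (∀ z, p (F z) = G z) ∧ ∀ x, F (x, 0) = f x

/-- Lemma A.2: given continuous maps `h : A → B`, `p : A → S`, `q : B → S` with
`q ∘ h = p`, if `p` and `h` are Serre fibrations and `h` is surjective, then
`q` is a Serre fibration. -/
theorem stmt_14 {A B S : Type*} [TopologicalSpace A] [TopologicalSpace B]
    [TopologicalSpace S] (h : A → B) (p : A → S) (q : B → S)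
    (hh : Continuous h) (hp : Continuous p) (hq : Continuous q)
    (hcomm : q ∘ h = p)
    (hpf : IsSerreFibration p) (hhf : IsSerreFibration h)
    (hsurj : Function.Surjective h) :
    IsSerreFibration q := by
  intro n f G hG0
  have hcomm' : ∀ a, q (h a) = p a := fun a => congrFun hcomm a
  obtain ⟨a, ha⟩ := hsurj (f (fun _ => 0))
  -- contracting homotopy of f
  have hHc : Continuous fun z : (Fin n → I) × I =>
      f (fun i => ⟨(z.2 : ℝ) * (z.1 i : ℝ), unitInterval.mul_mem z.2.2 (z.1 i).2⟩) := by
    apply f.continuous.comp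
    apply continuous_pi
    intro i
    exact Continuous.subtype_mk
      ((continuous_subtype_val.comp continuous_snd).mul
        (continuous_subtype_val.comp ((continuous_apply i).comp continuous_fst))) _
  set H : C((Fin n → I) × I, B) := ⟨_, hHc⟩ with hHdef
  obtain ⟨F1, hF1, hF10⟩ := hhf n ⟨fun _ => a, continuous_const⟩ H (by
    intro x
    show f _ = h a
    rw [ha]
    congr 1
    funext i
    ext
    simp)
  -- f' is a lift of f along h
  set f' : C(Fin n → I, A) := ⟨fun x => F1 (x, 1), F1.continuous.comp (by continuity)⟩ with hf'def
  have hf' : ∀ x, h (f' x) = f x := by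
    intro x
    show h (F1 (x, 1)) = f x
    rw [hF1]
    show f _ = f x
    congr 1
    funext i
    ext
    simp
  obtain ⟨F2, hF2, hF20⟩ := hpf n f' G (by
    intro x
    rw [hG0, ← hf' x, hcomm'])
  refine ⟨⟨fun z => h (F2 z), hh.comp F2.continuous⟩, ?_, ?_⟩
  · intro z
    show q (h (F2 z)) = G z
    rw [hcomm', hF2]
  · intro x
    show h (F2 (x, 0)) = f x
    rw [hF20, hf']
end
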